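/- arXiv:2211.11626 — 2 statements merged into one kernel-verified Lean document; each statement's English description precedes it below -/
import Mathlib

section
/- Let M_i = (𝔽_q^{n_i}, ρ_i), i = 1,2, be q-matroids of rank k_i, let n = n_1 + n_2 and M = M_1 ⊕ M_2. Suppose M is represented by some matrix over 𝔽_{q^m}. Then there exist matrices G_1 ∈ 𝔽_{q^m}^{k_1×n_1} and G_2 ∈ 𝔽_{q^m}^{k_2×n_2} such that M_1 = M_{G_1}, M_2 = M_{G_2}, and M = M_G where G is the block diagonal matrix with diagonal blocks G_1 and G_2. In particular M_1 and M_2 are 𝔽_{q^m}-representable. -/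
open Module Matrix

/-- The row space (over `Fq`) of a matrix with rows indexed by `Fin y`. -/
def rowSpace {Fq : Type*} [Field Fq] {y : ℕ} {ι : Type*} (Y : Matrix (Fin y) ι Fq) :
    Submodule Fq (ι → Fq) :=
  Submodule.span Fq (Set.range fun i => Y i)

/-- The rank function (as an integer) of the direct sum `M₁ ⊕ M₂` of q-matroids
`M₁ = (𝔽_q^{n₁}, ρ₁)` and `M₂ = (𝔽_q^{n₂}, ρ₂)` on `𝔽_q^{n₁+n₂} = (Fin n₁ ⊕ Fin n₂) → 𝔽_q`. -/
noncomputable def dsRank {Fq : Type*} [Field Fq] {n₁ n₂ : ℕ}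
    (ρ₁ : Submodule Fq (Fin n₁ → Fq) → ℕ) (ρ₂ : Submodule Fq (Fin n₂ → Fq) → ℕ)
    (V : Submodule Fq ((Fin n₁ ⊕ Fin n₂) → Fq)) : ℤ :=
  (finrank Fq V : ℤ) +
    sInf {z : ℤ | ∃ X : Submodule Fq ((Fin n₁ ⊕ Fin n₂) → Fq), X ≤ V ∧
      z = (ρ₁ (X.map (LinearMap.funLeft Fq Fq Sum.inl)) : ℤ) +
            (ρ₂ (X.map (LinearMap.funLeft Fq Fq Sum.inr)) : ℤ) - (finrank Fq X : ℤ)}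

set_option synthInstance.maxHeartbeats 1000000
set_option maxHeartbeats 1000000


/-! ### Auxiliary lemmas -/

-- unit increase property of a q-matroid rank function
lemma rho_unit {Fq : Type*} [Field Fq] {n : ℕ} (ρ : Submodule Fq (Fin n → Fq) → ℕ)
    (hR1 : ∀ V, ρ V ≤ finrank Fq V)
    (hR3 : ∀ V W, ρ (V ⊔ W) + ρ (V ⊓ W) ≤ ρ V + ρ W) :
    ∀ (d : ℕ) (X W : Submodule Fq (Fin n → Fq)), X ≤ W →
      finrank Fq W ≤ finrank Fq X + d → ρ W ≤ ρ X + d := by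
  intro d
  induction d with
  | zero =>
    intro X W hle hfr
    have : X = W := Submodule.eq_of_le_of_finrank_le hle (by simpa using hfr)
    simp [this]
  | succ d ih =>
    intro X W hle hfr
    by_cases hXW : X = W
    · subst hXW; exact Nat.le_add_right _ _
    · have hlt : X < W := lt_of_le_of_ne hle hXW
      obtain ⟨v, hvW, hvX⟩ := SetLike.exists_of_lt hlt
      set X' : Submodule Fq (Fin n → Fq) := X ⊔ Submodule.span Fq {v} with hX'
      have hXX' : X < X' := by
        refine lt_of_le_of_ne le_sup_left ?_
        intro h
        exact hvX (h ▸ Submodule.mem_sup_right (Submodule.mem_span_singleton_self v))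
      have hX'W : X' ≤ W := sup_le hle ((Submodule.span_singleton_le_iff_mem _ _).2 hvW)
      have hsp : finrank Fq (Submodule.span Fq ({v} : Set (Fin n → Fq))) ≤ 1 := by
        by_cases hv : v = 0
        · rw [hv, Submodule.span_zero_singleton]
          simp
        · simp [finrank_span_singleton hv]
      have h1 : ρ X' ≤ ρ X + 1 := by
        have h3 := hR3 X (Submodule.span Fq {v})
        have h2 := hR1 (Submodule.span Fq ({v} : Set (Fin n → Fq)))
        rw [hX']
        omega
      have hfr' : finrank Fq W ≤ finrank Fq X' + d := by
        have := Submodule.finrank_lt_finrank_of_lt hXX'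
        omega
      have := ih X' W hX'W hfr'
      omega

lemma rho_lower {Fq : Type*} [Field Fq] {n : ℕ} (ρ : Submodule Fq (Fin n → Fq) → ℕ)
    (hR1 : ∀ V, ρ V ≤ finrank Fq V)
    (hR3 : ∀ V W, ρ (V ⊔ W) + ρ (V ⊓ W) ≤ ρ V + ρ W)
    (W : Submodule Fq (Fin n → Fq)) :
    ρ ⊤ + finrank Fq W ≤ ρ W + n := by
  have hWn : finrank Fq W ≤ n := by
    have := Submodule.finrank_le W
    simpa [finrank_pi] using this
  have htop : finrank Fq (⊤ : Submodule Fq (Fin n → Fq)) = n := by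
    simp [finrank_top, finrank_pi]
  have := rho_unit ρ hR1 hR3 (n - finrank Fq W) W ⊤ le_top (by omega)
  omega

lemma map_eq_bot_of_le_ker {R M N : Type*} [Field R] [AddCommGroup M] [AddCommGroup N]
    [Module R M] [Module R N] (f : M →ₗ[R] N) (X : Submodule R M)
    (hX : X ≤ LinearMap.ker f) : X.map f = ⊥ := by
  rw [Submodule.eq_bot_iff]
  rintro y ⟨x, hx, rfl⟩
  exact hX hx

section dims
variable {Fq : Type*} [Field Fq] {n₁ n₂ : ℕ}

local notation "π₁" => LinearMap.funLeft Fq Fq (Sum.inl : Fin n₁ → Fin n₁ ⊕ Fin n₂)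
local notation "π₂" => LinearMap.funLeft Fq Fq (Sum.inr : Fin n₂ → Fin n₁ ⊕ Fin n₂)

lemma vec_eq_zero (v : (Fin n₁ ⊕ Fin n₂) → Fq) (h1 : π₁ v = 0) (h2 : π₂ v = 0) : v = 0 := by
  funext x
  cases x with
  | inl a => exact congrFun h1 a
  | inr a => exact congrFun h2 a

/-- rank–nullity style inequality. -/
lemma finrank_le_sum_proj (X : Submodule Fq ((Fin n₁ ⊕ Fin n₂) → Fq)) :
    finrank Fq X ≤ finrank Fq (X.map π₁) + finrank Fq (X.map π₂) := by
  set f := (π₁).domRestrict X with hf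
  have hr : LinearMap.range f = X.map π₁ := LinearMap.range_domRestrict X _
  have hrn := LinearMap.finrank_range_add_finrank_ker f
  set g := ((π₂).domRestrict X).comp (LinearMap.ker f).subtype with hg
  have hgker : LinearMap.ker g = ⊥ := by
    rw [Submodule.eq_bot_iff]
    intro x hx
    have h2 : π₂ (x.1 : (Fin n₁ ⊕ Fin n₂) → Fq) = 0 := hx
    have h1 : π₁ (x.1 : (Fin n₁ ⊕ Fin n₂) → Fq) = 0 := x.2
    have : (x.1 : (Fin n₁ ⊕ Fin n₂) → Fq) = 0 := vec_eq_zero _ h1 h2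
    exact Subtype.ext (Subtype.ext this)
  have hginj : Function.Injective g := by
    intro a b hab
    have ha : π₁ (a.1 : (Fin n₁ ⊕ Fin n₂) → Fq) = 0 := a.2
    have hb : π₁ (b.1 : (Fin n₁ ⊕ Fin n₂) → Fq) = 0 := b.2
    have hab' : π₂ (a.1 : (Fin n₁ ⊕ Fin n₂) → Fq) = π₂ (b.1 : (Fin n₁ ⊕ Fin n₂) → Fq) := hab
    have h1 : π₁ ((a.1 : (Fin n₁ ⊕ Fin n₂) → Fq) - b.1) = 0 := by rw [map_sub, ha, hb, sub_self]
    have h2 : π₂ ((a.1 : (Fin n₁ ⊕ Fin n₂) → Fq) - b.1) = 0 := by rw [map_sub, hab', sub_self]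
    exact Subtype.ext (Subtype.ext (sub_eq_zero.mp (vec_eq_zero _ h1 h2)))
  have hker : finrank Fq (LinearMap.ker f) = finrank Fq (LinearMap.range g) :=
    (LinearMap.finrank_range_of_inj hginj).symm
  have hle : LinearMap.range g ≤ X.map π₂ := by
    rintro y ⟨x, rfl⟩
    exact ⟨x.1.1, x.1.2, rfl⟩
  have := Submodule.finrank_mono hle
  rw [hr] at hrn
  omega

lemma finrank_map_inl_of_ker (X : Submodule Fq ((Fin n₁ ⊕ Fin n₂) → Fq))
    (hX : X ≤ LinearMap.ker π₂) :
    finrank Fq (X.map π₁) = finrank Fq X := by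
  set f := (π₁).domRestrict X with hf
  have hr : LinearMap.range f = X.map π₁ := LinearMap.range_domRestrict X _
  have hker : LinearMap.ker f = ⊥ := by
    rw [Submodule.eq_bot_iff]
    intro x hx
    have h1 : π₁ (x.1 : (Fin n₁ ⊕ Fin n₂) → Fq) = 0 := hx
    have h2 : π₂ (x.1 : (Fin n₁ ⊕ Fin n₂) → Fq) = 0 := hX x.2
    exact Subtype.ext (vec_eq_zero _ h1 h2)
  have hrn := LinearMap.finrank_range_add_finrank_ker f
  rw [hr, hker] at hrn
  simpa using hrn

lemma finrank_map_inr_of_ker (X : Submodule Fq ((Fin n₁ ⊕ Fin n₂) → Fq))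
    (hX : X ≤ LinearMap.ker π₁) :
    finrank Fq (X.map π₂) = finrank Fq X := by
  set f := (π₂).domRestrict X with hf
  have hr : LinearMap.range f = X.map π₂ := LinearMap.range_domRestrict X _
  have hker : LinearMap.ker f = ⊥ := by
    rw [Submodule.eq_bot_iff]
    intro x hx
    have h2 : π₂ (x.1 : (Fin n₁ ⊕ Fin n₂) → Fq) = 0 := hx
    have h1 : π₁ (x.1 : (Fin n₁ ⊕ Fin n₂) → Fq) = 0 := hX x.2
    exact Subtype.ext (vec_eq_zero _ h1 h2)
  have hrn := LinearMap.finrank_range_add_finrank_ker f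
  rw [hr, hker] at hrn
  simpa using hrn

end dims

lemma int_sInf_eq {S : Set ℤ} {a : ℤ} (h₁ : a ∈ S) (h₂ : ∀ z ∈ S, a ≤ z) : sInf S = a :=
  le_antisymm (csInf_le ⟨a, h₂⟩ h₁) (le_csInf ⟨a, h₁⟩ h₂)

section ds
variable {Fq : Type*} [Field Fq] {n₁ n₂ : ℕ}
  (ρ₁ : Submodule Fq (Fin n₁ → Fq) → ℕ) (ρ₂ : Submodule Fq (Fin n₂ → Fq) → ℕ)

local notation "π₁" => LinearMap.funLeft Fq Fq (Sum.inl : Fin n₁ → Fin n₁ ⊕ Fin n₂)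
local notation "π₂" => LinearMap.funLeft Fq Fq (Sum.inr : Fin n₂ → Fin n₁ ⊕ Fin n₂)

lemma dsRank_of_le_ker
    (hR1₁ : ∀ V, ρ₁ V ≤ finrank Fq V)
    (hR3₁ : ∀ V W, ρ₁ (V ⊔ W) + ρ₁ (V ⊓ W) ≤ ρ₁ V + ρ₁ W)
    (hR1₂ : ∀ V, ρ₂ V ≤ finrank Fq V)
    (V : Submodule Fq ((Fin n₁ ⊕ Fin n₂) → Fq)) (hV : V ≤ LinearMap.ker π₂) :
    dsRank ρ₁ ρ₂ V = ρ₁ (V.map π₁) := by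
  have hbot : ρ₂ (⊥ : Submodule Fq (Fin n₂ → Fq)) = 0 := by
    have := hR1₂ ⊥
    simpa using this
  have key : sInf {z : ℤ | ∃ X : Submodule Fq ((Fin n₁ ⊕ Fin n₂) → Fq), X ≤ V ∧
      z = (ρ₁ (X.map π₁) : ℤ) + (ρ₂ (X.map π₂) : ℤ) - (finrank Fq X : ℤ)}
      = (ρ₁ (V.map π₁) : ℤ) - (finrank Fq V : ℤ) := by
    apply int_sInf_eq
    · refine ⟨V, le_rfl, ?_⟩
      rw [map_eq_bot_of_le_ker _ V hV, hbot]
      push_cast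
      ring
    · rintro z ⟨X, hXV, rfl⟩
      rw [map_eq_bot_of_le_ker _ X (hXV.trans hV), hbot]
      have h1 : finrank Fq (X.map π₁) = finrank Fq X :=
        finrank_map_inl_of_ker X (hXV.trans hV)
      have h2 : finrank Fq (V.map π₁) = finrank Fq V :=
        finrank_map_inl_of_ker V hV
      have hXle : X.map π₁ ≤ V.map π₁ := Submodule.map_mono hXV
      have hfle : finrank Fq (X.map π₁) ≤ finrank Fq (V.map π₁) :=
        Submodule.finrank_mono hXle
      have := rho_unit ρ₁ hR1₁ hR3₁ (finrank Fq (V.map π₁) - finrank Fq (X.map π₁))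
        (X.map π₁) (V.map π₁) hXle (by omega)
      push_cast
      omega
  rw [dsRank, key]
  ring

lemma dsRank_of_le_ker' (hR1₁ : ∀ V, ρ₁ V ≤ finrank Fq V)
    (hR1₂ : ∀ V, ρ₂ V ≤ finrank Fq V)
    (hR3₂ : ∀ V W, ρ₂ (V ⊔ W) + ρ₂ (V ⊓ W) ≤ ρ₂ V + ρ₂ W)
    (V : Submodule Fq ((Fin n₁ ⊕ Fin n₂) → Fq)) (hV : V ≤ LinearMap.ker π₁) :
    dsRank ρ₁ ρ₂ V = ρ₂ (V.map π₂) := by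
  have hbot : ρ₁ (⊥ : Submodule Fq (Fin n₁ → Fq)) = 0 := by
    have := hR1₁ ⊥
    simpa using this
  have key : sInf {z : ℤ | ∃ X : Submodule Fq ((Fin n₁ ⊕ Fin n₂) → Fq), X ≤ V ∧
      z = (ρ₁ (X.map π₁) : ℤ) + (ρ₂ (X.map π₂) : ℤ) - (finrank Fq X : ℤ)}
      = (ρ₂ (V.map π₂) : ℤ) - (finrank Fq V : ℤ) := by
    apply int_sInf_eq
    · refine ⟨V, le_rfl, ?_⟩
      rw [map_eq_bot_of_le_ker _ V hV, hbot]
      push_cast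
      ring
    · rintro z ⟨X, hXV, rfl⟩
      rw [map_eq_bot_of_le_ker _ X (hXV.trans hV), hbot]
      have h1 : finrank Fq (X.map π₂) = finrank Fq X :=
        finrank_map_inr_of_ker X (hXV.trans hV)
      have h2 : finrank Fq (V.map π₂) = finrank Fq V :=
        finrank_map_inr_of_ker V hV
      have hXle : X.map π₂ ≤ V.map π₂ := Submodule.map_mono hXV
      have hfle : finrank Fq (X.map π₂) ≤ finrank Fq (V.map π₂) :=
        Submodule.finrank_mono hXle
      have := rho_unit ρ₂ hR1₂ hR3₂ (finrank Fq (V.map π₂) - finrank Fq (X.map π₂))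
        (X.map π₂) (V.map π₂) hXle (by omega)
      push_cast
      omega
  rw [dsRank, key]
  ring

lemma dsRank_top
    (hR1₁ : ∀ V, ρ₁ V ≤ finrank Fq V)
    (hR3₁ : ∀ V W, ρ₁ (V ⊔ W) + ρ₁ (V ⊓ W) ≤ ρ₁ V + ρ₁ W)
    (hR1₂ : ∀ V, ρ₂ V ≤ finrank Fq V)
    (hR3₂ : ∀ V W, ρ₂ (V ⊔ W) + ρ₂ (V ⊓ W) ≤ ρ₂ V + ρ₂ W) :
    dsRank ρ₁ ρ₂ (⊤ : Submodule Fq ((Fin n₁ ⊕ Fin n₂) → Fq)) = (ρ₁ ⊤ : ℤ) + (ρ₂ ⊤ : ℤ) := by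
  have htopfr : finrank Fq (⊤ : Submodule Fq ((Fin n₁ ⊕ Fin n₂) → Fq)) = n₁ + n₂ := by
    simp [finrank_top, finrank_pi]
  have hmap₁ : (⊤ : Submodule Fq ((Fin n₁ ⊕ Fin n₂) → Fq)).map π₁ = ⊤ := by
    rw [Submodule.map_top, LinearMap.range_eq_top]
    exact LinearMap.funLeft_surjective_of_injective Fq Fq _ Sum.inl_injective
  have hmap₂ : (⊤ : Submodule Fq ((Fin n₁ ⊕ Fin n₂) → Fq)).map π₂ = ⊤ := by
    rw [Submodule.map_top, LinearMap.range_eq_top]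
    exact LinearMap.funLeft_surjective_of_injective Fq Fq _ Sum.inr_injective
  have key : sInf {z : ℤ | ∃ X : Submodule Fq ((Fin n₁ ⊕ Fin n₂) → Fq), X ≤ ⊤ ∧
      z = (ρ₁ (X.map π₁) : ℤ) + (ρ₂ (X.map π₂) : ℤ) - (finrank Fq X : ℤ)}
      = (ρ₁ ⊤ : ℤ) + (ρ₂ ⊤ : ℤ) - ((n₁ : ℤ) + n₂) := by
    apply int_sInf_eq
    · refine ⟨⊤, le_rfl, ?_⟩
      rw [hmap₁, hmap₂, htopfr]
      push_cast
      ring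
    · rintro z ⟨X, _, rfl⟩
      have hd := finrank_le_sum_proj X
      have hl1 := rho_lower ρ₁ hR1₁ hR3₁ (X.map π₁)
      have hl2 := rho_lower ρ₂ hR1₂ hR3₂ (X.map π₂)
      omega
  rw [dsRank, key, htopfr]
  push_cast
  ring

end ds

section rs
variable {Fq : Type*} [Field Fq] {n₁ n₂ : ℕ}

local notation "π₁" => LinearMap.funLeft Fq Fq (Sum.inl : Fin n₁ → Fin n₁ ⊕ Fin n₂)
local notation "π₂" => LinearMap.funLeft Fq Fq (Sum.inr : Fin n₂ → Fin n₁ ⊕ Fin n₂)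

lemma rowSpace_ext_le_ker {y : ℕ} (Y₁ : Matrix (Fin y) (Fin n₁) Fq) :
    rowSpace (Matrix.of fun i => Sum.elim (Y₁ i) 0) ≤ LinearMap.ker π₂ := by
  rw [rowSpace, Submodule.span_le]
  rintro v ⟨i, rfl⟩
  simp only [SetLike.mem_coe, LinearMap.mem_ker]
  funext j
  simp [LinearMap.funLeft_apply]

lemma rowSpace_ext_map {y : ℕ} (Y₁ : Matrix (Fin y) (Fin n₁) Fq) :
    (rowSpace (Matrix.of fun i => Sum.elim (Y₁ i) 0)).map π₁ = rowSpace Y₁ := by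
  rw [rowSpace, rowSpace, Submodule.map_span]
  congr 1
  ext v
  constructor
  · rintro ⟨w, ⟨i, rfl⟩, rfl⟩
    exact ⟨i, rfl⟩
  · rintro ⟨i, rfl⟩
    exact ⟨_, ⟨i, rfl⟩, rfl⟩

lemma rowSpace_ext_le_ker' {y : ℕ} (Y₂ : Matrix (Fin y) (Fin n₂) Fq) :
    rowSpace (Matrix.of fun i => Sum.elim 0 (Y₂ i)) ≤ LinearMap.ker π₁ := by
  rw [rowSpace, Submodule.span_le]
  rintro v ⟨i, rfl⟩
  simp only [SetLike.mem_coe, LinearMap.mem_ker]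
  funext j
  simp [LinearMap.funLeft_apply]

lemma rowSpace_ext_map' {y : ℕ} (Y₂ : Matrix (Fin y) (Fin n₂) Fq) :
    (rowSpace (Matrix.of fun i => Sum.elim 0 (Y₂ i))).map π₂ = rowSpace Y₂ := by
  rw [rowSpace, rowSpace, Submodule.map_span]
  congr 1
  ext v
  constructor
  · rintro ⟨w, ⟨i, rfl⟩, rfl⟩
    exact ⟨i, rfl⟩
  · rintro ⟨i, rfl⟩
    exact ⟨_, ⟨i, rfl⟩, rfl⟩

lemma rowSpace_one {n : ℕ} : rowSpace (1 : Matrix (Fin n) (Fin n) Fq) = ⊤ := by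
  rw [rowSpace, eq_top_iff, ← (Pi.basisFun Fq (Fin n)).span_eq, Submodule.span_le]
  rintro v ⟨i, rfl⟩
  apply Submodule.subset_span
  refine ⟨i, ?_⟩
  funext j
  simp [Pi.basisFun_apply, Matrix.one_apply, Pi.single_apply, eq_comm]

lemma rowSpace_sumId :
    rowSpace ((1 : Matrix (Fin n₁ ⊕ Fin n₂) (Fin n₁ ⊕ Fin n₂) Fq).submatrix
      (finSumFinEquiv (m := n₁) (n := n₂)).symm id) = ⊤ := by
  rw [rowSpace, eq_top_iff, ← (Pi.basisFun Fq (Fin n₁ ⊕ Fin n₂)).span_eq, Submodule.span_le]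
  rintro v ⟨s, rfl⟩
  apply Submodule.subset_span
  refine ⟨finSumFinEquiv s, ?_⟩
  funext j
  simp [Pi.basisFun_apply, Matrix.one_apply, Pi.single_apply, eq_comm]

end rs

section fact
variable {K : Type*} [Field K]

lemma rank_mul_left_of_inj {r : ℕ} {κ ι : Type*} [Fintype κ] [Fintype ι]
    (B : Matrix (Fin r) κ K) (hB : Function.Injective B.mulVecLin)
    (M : Matrix κ ι K) : (B * M).rank = M.rank := by
  rw [Matrix.rank, Matrix.rank, Matrix.mulVecLin_mul, LinearMap.range_comp]
  exact ((Submodule.equivMapOfInjective _ hB _).finrank_eq).symm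

lemma exists_factor {r k : ℕ} {ι : Type*} [Fintype ι] [DecidableEq ι]
    (Hm : Matrix (Fin r) ι K) (hk : Hm.rank = k) :
    ∃ (B : Matrix (Fin r) (Fin k) K) (C : Matrix (Fin k) ι K),
      Hm = B * C ∧ Function.Injective B.mulVecLin := by
  have hk' : finrank K (LinearMap.range Hm.mulVecLin) = k := hk
  let b : Basis (Fin k) K (LinearMap.range Hm.mulVecLin) :=
    Module.finBasisOfFinrankEq K _ hk'
  refine ⟨Matrix.of (fun i j => (b j : Fin r → K) i),
    Matrix.of (fun j c => b.repr ⟨Hm.mulVecLin (Pi.single c 1),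
      LinearMap.mem_range_self _ _⟩ j), ?_, ?_⟩
  · ext i c
    have hs := b.sum_repr ⟨Hm.mulVecLin (Pi.single c 1), LinearMap.mem_range_self _ _⟩
    have hs' : ∑ j, (b.repr ⟨Hm.mulVecLin (Pi.single c 1),
        LinearMap.mem_range_self _ _⟩) j • ((b j : Fin r → K)) = Hm.mulVecLin (Pi.single c 1) := by
      have := congrArg Subtype.val hs
      rw [Submodule.coe_sum] at this
      exact this
    have hs'' := congrFun hs' i
    have hcol : Hm.mulVecLin (Pi.single c 1) i = Hm i c := by
      simp [Matrix.mulVecLin_apply, Matrix.mulVec_single]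
    rw [Matrix.mul_apply]
    simp only [Matrix.of_apply]
    rw [← hcol, ← hs'']
    simp [Finset.sum_apply, mul_comm]
  · have hker : LinearMap.ker (Matrix.of (fun i j => (b j : Fin r → K) i)).mulVecLin = ⊥ := by
      rw [Submodule.eq_bot_iff]
      intro x hx
      have hx0 : (Matrix.of (fun i j => (b j : Fin r → K) i)).mulVecLin x = 0 := hx
      have hsum0 : ∑ j, x j • ((b j : Fin r → K)) = 0 := by
        rw [← hx0]
        funext i
        simp [Matrix.mulVecLin_apply, Matrix.mulVec, dotProduct, Finset.sum_apply,
          mul_comm]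
      have hsum : ∑ j, x j • (b j) = (0 : LinearMap.range Hm.mulVecLin) := by
        apply Subtype.ext
        simp only [ZeroMemClass.coe_zero]
        rw [← hsum0]
        push_cast
        rfl
      have hli := b.linearIndependent
      have := Fintype.linearIndependent_iff.mp hli x hsum
      funext j; exact this j
    exact LinearMap.ker_eq_bot.mp hker

lemma rank_submatrix_id_equiv {r : ℕ} {m n : Type*} [Fintype m] [Fintype n]
    (A : Matrix (Fin r) m K) (e : n ≃ m) : (A.submatrix id ⇑e).rank = A.rank := by
  rw [Matrix.rank, Matrix.rank, Matrix.mulVecLin_submatrix, LinearMap.range_comp,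
    LinearMap.range_comp,
    show LinearMap.funLeft K K e.symm = (LinearEquiv.funCongrLeft K K e.symm : _) from rfl,
    LinearEquiv.range, Submodule.map_top]
  have hid : LinearMap.funLeft K K (id : Fin r → Fin r) = LinearMap.id := by
    ext v
    simp [LinearMap.funLeft_apply]
  rw [hid, Submodule.map_id]

end fact

/-- If the direct sum `M = M₁ ⊕ M₂` of q-matroids of ranks `k₁, k₂` is
represented by some matrix over `𝔽_{q^m}`, then there are `G₁ ∈ 𝔽_{q^m}^{k₁×n₁}` and
`G₂ ∈ 𝔽_{q^m}^{k₂×n₂}` with `M₁ = M_{G₁}`, `M₂ = M_{G₂}`, and `M` represented by the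
block diagonal matrix `diag(G₁, G₂)`; in particular `M₁, M₂` are `𝔽_{q^m}`-representable. -/
theorem stmt12 (Fq K : Type*) [Field Fq] [Fintype Fq] [Field K] [Fintype K] [Algebra Fq K]
    (n₁ n₂ k₁ k₂ : ℕ)
    (ρ₁ : Submodule Fq (Fin n₁ → Fq) → ℕ) (ρ₂ : Submodule Fq (Fin n₂ → Fq) → ℕ)
    (hR1₁ : ∀ V, ρ₁ V ≤ finrank Fq V)
    (hR2₁ : ∀ V W, V ≤ W → ρ₁ V ≤ ρ₁ W)
    (hR3₁ : ∀ V W, ρ₁ (V ⊔ W) + ρ₁ (V ⊓ W) ≤ ρ₁ V + ρ₁ W)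
    (hR1₂ : ∀ V, ρ₂ V ≤ finrank Fq V)
    (hR2₂ : ∀ V W, V ≤ W → ρ₂ V ≤ ρ₂ W)
    (hR3₂ : ∀ V W, ρ₂ (V ⊔ W) + ρ₂ (V ⊓ W) ≤ ρ₂ V + ρ₂ W)
    (hrk₁ : ρ₁ ⊤ = k₁) (hrk₂ : ρ₂ ⊤ = k₂)
    (hrep : ∃ (r : ℕ) (H : Matrix (Fin r) (Fin n₁ ⊕ Fin n₂) K),
      ∀ (y : ℕ) (Y : Matrix (Fin y) (Fin n₁ ⊕ Fin n₂) Fq),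
        ((H * (Y.map (algebraMap Fq K))ᵀ).rank : ℤ) = dsRank ρ₁ ρ₂ (rowSpace Y)) :
    ∃ (G₁ : Matrix (Fin k₁) (Fin n₁) K) (G₂ : Matrix (Fin k₂) (Fin n₂) K),
      (∀ (y : ℕ) (Y : Matrix (Fin y) (Fin n₁) Fq),
        (G₁ * (Y.map (algebraMap Fq K))ᵀ).rank = ρ₁ (rowSpace Y)) ∧
      (∀ (y : ℕ) (Y : Matrix (Fin y) (Fin n₂) Fq),
        (G₂ * (Y.map (algebraMap Fq K))ᵀ).rank = ρ₂ (rowSpace Y)) ∧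
      (∀ (y : ℕ) (Y : Matrix (Fin y) (Fin n₁ ⊕ Fin n₂) Fq),
        ((fromBlocks G₁ 0 0 G₂ * (Y.map (algebraMap Fq K))ᵀ).rank : ℤ) =
          dsRank ρ₁ ρ₂ (rowSpace Y)) := by

  classical
  obtain ⟨r, H, hH⟩ := hrep
  set H₁ : Matrix (Fin r) (Fin n₁) K := Matrix.of fun i j => H i (Sum.inl j) with hH₁def
  set H₂ : Matrix (Fin r) (Fin n₂) K := Matrix.of fun i j => H i (Sum.inr j) with hH₂def
  -- restriction to the first block represents `ρ₁`
  have hrkH1 : ∀ (y : ℕ) (Y₁ : Matrix (Fin y) (Fin n₁) Fq),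
      (H₁ * (Y₁.map (algebraMap Fq K))ᵀ).rank = ρ₁ (rowSpace Y₁) := by
    intro y Y₁
    have hmul : H * (((Matrix.of fun i => Sum.elim (Y₁ i) 0) :
        Matrix (Fin y) (Fin n₁ ⊕ Fin n₂) Fq).map (algebraMap Fq K))ᵀ
        = H₁ * (Y₁.map (algebraMap Fq K))ᵀ := by
      ext i j
      rw [Matrix.mul_apply, Matrix.mul_apply, Fintype.sum_sum_type]
      simp [hH₁def]
    have h := hH y (Matrix.of fun i => Sum.elim (Y₁ i) 0)
    rw [hmul, dsRank_of_le_ker ρ₁ ρ₂ hR1₁ hR3₁ hR1₂ _ (rowSpace_ext_le_ker Y₁),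
      rowSpace_ext_map Y₁] at h
    exact_mod_cast h
  have hrkH2 : ∀ (y : ℕ) (Y₂ : Matrix (Fin y) (Fin n₂) Fq),
      (H₂ * (Y₂.map (algebraMap Fq K))ᵀ).rank = ρ₂ (rowSpace Y₂) := by
    intro y Y₂
    have hmul : H * (((Matrix.of fun i => Sum.elim 0 (Y₂ i)) :
        Matrix (Fin y) (Fin n₁ ⊕ Fin n₂) Fq).map (algebraMap Fq K))ᵀ
        = H₂ * (Y₂.map (algebraMap Fq K))ᵀ := by
      ext i j
      rw [Matrix.mul_apply, Matrix.mul_apply, Fintype.sum_sum_type]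
      simp [hH₂def]
    have h := hH y (Matrix.of fun i => Sum.elim 0 (Y₂ i))
    rw [hmul, dsRank_of_le_ker' ρ₁ ρ₂ hR1₁ hR1₂ hR3₂ _ (rowSpace_ext_le_ker' Y₂),
      rowSpace_ext_map' Y₂] at h
    exact_mod_cast h
  -- ranks of the blocks and of `H`
  have hrankH₁ : H₁.rank = k₁ := by
    have := hrkH1 n₁ 1
    rwa [Matrix.map_one _ (map_zero _) (map_one _), Matrix.transpose_one, Matrix.mul_one,
      rowSpace_one, hrk₁] at this
  have hrankH₂ : H₂.rank = k₂ := by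
    have := hrkH2 n₂ 1
    rwa [Matrix.map_one _ (map_zero _) (map_one _), Matrix.transpose_one, Matrix.mul_one,
      rowSpace_one, hrk₂] at this
  have hrankH : H.rank = k₁ + k₂ := by
    have h := hH (n₁ + n₂)
      ((1 : Matrix (Fin n₁ ⊕ Fin n₂) (Fin n₁ ⊕ Fin n₂) Fq).submatrix
        (finSumFinEquiv (m := n₁) (n := n₂)).symm id)
    rw [rowSpace_sumId, dsRank_top ρ₁ ρ₂ hR1₁ hR3₁ hR1₂ hR3₂, hrk₁, hrk₂] at h
    have hmul : H * ((((1 : Matrix (Fin n₁ ⊕ Fin n₂) (Fin n₁ ⊕ Fin n₂) Fq).submatrix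
        (finSumFinEquiv (m := n₁) (n := n₂)).symm id)).map (algebraMap Fq K))ᵀ
        = H.submatrix id ⇑(finSumFinEquiv (m := n₁) (n := n₂)).symm := by
      ext i j
      rw [Matrix.mul_apply]
      simp [Matrix.one_apply, eq_comm]
    rw [hmul, rank_submatrix_id_equiv H (finSumFinEquiv (m := n₁) (n := n₂)).symm] at h
    exact_mod_cast h
  -- factorizations
  obtain ⟨A₁, G₁, hfac₁, hinj₁⟩ := exists_factor H₁ hrankH₁
  obtain ⟨A₂, G₂, hfac₂, hinj₂⟩ := exists_factor H₂ hrankH₂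
  refine ⟨G₁, G₂, ?_, ?_, ?_⟩
  · intro y Y
    have h : H₁ * (Y.map (algebraMap Fq K))ᵀ = A₁ * (G₁ * (Y.map (algebraMap Fq K))ᵀ) := by
      rw [← Matrix.mul_assoc, ← hfac₁]
    rw [← hrkH1 y Y, h, rank_mul_left_of_inj A₁ hinj₁]
  · intro y Y
    have h : H₂ * (Y.map (algebraMap Fq K))ᵀ = A₂ * (G₂ * (Y.map (algebraMap Fq K))ᵀ) := by
      rw [← Matrix.mul_assoc, ← hfac₂]
    rw [← hrkH2 y Y, h, rank_mul_left_of_inj A₂ hinj₂]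
  · -- the block diagonal matrix represents the direct sum
    set A : Matrix (Fin r) (Fin k₁ ⊕ Fin k₂) K :=
      Matrix.of fun i s => Sum.elim (fun j => A₁ i j) (fun j => A₂ i j) s with hAdef
    have hAD : A * fromBlocks G₁ 0 0 G₂ = H := by
      ext i c
      cases c with
      | inl c =>
        have h1 : H i (Sum.inl c) = (A₁ * G₁) i c := by rw [← hfac₁]; rfl
        rw [Matrix.mul_apply, Fintype.sum_sum_type, h1, Matrix.mul_apply]
        simp [hAdef, Matrix.fromBlocks]
      | inr c =>
        have h2 : H i (Sum.inr c) = (A₂ * G₂) i c := by rw [← hfac₂]; rfl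
        rw [Matrix.mul_apply, Fintype.sum_sum_type, h2, Matrix.mul_apply]
        simp [hAdef, Matrix.fromBlocks]
    have hArank : A.rank = k₁ + k₂ := by
      apply le_antisymm
      · have := A.rank_le_card_width
        simpa using this
      · calc k₁ + k₂ = H.rank := hrankH.symm
          _ = (A * fromBlocks G₁ 0 0 G₂).rank := by rw [hAD]
          _ ≤ A.rank := Matrix.rank_mul_le_left _ _
    have hAinj : Function.Injective A.mulVecLin := by
      have h1 := LinearMap.finrank_range_add_finrank_ker A.mulVecLin
      have hdom : finrank K ((Fin k₁ ⊕ Fin k₂) → K) = k₁ + k₂ := by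
        simp [finrank_pi]
      have hrange : finrank K (LinearMap.range A.mulVecLin) = k₁ + k₂ := hArank
      have hker0 : finrank K (LinearMap.ker A.mulVecLin) = 0 := by omega
      exact LinearMap.ker_eq_bot.mp (Submodule.finrank_eq_zero.mp hker0)
    intro y Y
    have h : H * (Y.map (algebraMap Fq K))ᵀ
        = A * (fromBlocks G₁ 0 0 G₂ * (Y.map (algebraMap Fq K))ᵀ) := by
      rw [← Matrix.mul_assoc, hAD]
    rw [← hH y Y, h, rank_mul_left_of_inj A hAinj]
end

section
/- Let M_1 = U_{n_1,n_1}(q) be the free q-matroid on 𝔽_q^{n_1} (rank function ρ_1(V) = dim V), and let M_2 = M_{G_2} be the q-matroid on 𝔽_q^{n_2} represented by G_2 ∈ 𝔽_{q^m}^{k_2×n_2}. Then the direct sum M_1 ⊕ M_2 is represented by the block diagonal matrix G = diag(I_{n_1}, G_2) over 𝔽_{q^m}; that is, ρ_G equals the rank function of M_1 ⊕ M_2 on all 𝔽_q-subspaces of 𝔽_q^{n_1+n_2}. In particular M_1 ⊕ M_2 is 𝔽_{q^m}-representable. -/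
open Module Matrix

section Aux

open Submodule Set

variable {Fq K : Type*} [Field Fq] [Field K] [Algebra Fq K]

/-- Entrywise application of `algebraMap` as an `Fq`-linear map. -/
def embL (Fq K : Type*) [Field Fq] [Field K] [Algebra Fq K] (ι : Type*) :
    (ι → Fq) →ₗ[Fq] (ι → K) where
  toFun v i := algebraMap Fq K (v i)
  map_add' x y := by funext i; simp
  map_smul' c x := by funext i; simp [Algebra.smul_def]

@[simp] lemma embL_apply {ι : Type*} (v : ι → Fq) (i : ι) :
    embL Fq K ι v i = algebraMap Fq K (v i) := rfl

lemma li_emb [Finite Fq] [Finite K] {ι : Type*} {d : ℕ} {v : Fin d → (ι → Fq)}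
    (hv : LinearIndependent Fq v) :
    LinearIndependent K (fun j => embL Fq K ι (v j)) := by
  haveI : Module.Finite Fq K := Module.finite_iff_finite.2 (by infer_instance)
  rw [Fintype.linearIndependent_iff] at hv ⊢
  intro g hg j
  set c := Module.finBasis Fq K with hc
  have key : ∀ t, (c.repr (g j)) t = 0 := by
    intro t
    refine hv (fun j => (c.repr (g j)) t) ?_ j
    funext i
    have hgi : (∑ j, g j • embL Fq K ι (v j)) i = 0 := by rw [hg]; rfl
    simp only [Finset.sum_apply, Pi.smul_apply, embL_apply, smul_eq_mul] at hgi
    have h2 : (c.repr (∑ j, g j * algebraMap Fq K (v j i))) t = 0 := by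
      rw [hgi]; simp
    rw [map_sum, Finsupp.finset_sum_apply] at h2
    have h3 : ∀ j, (c.repr (g j * algebraMap Fq K (v j i))) t
        = (c.repr (g j)) t * v j i := by
      intro j
      rw [mul_comm, ← Algebra.smul_def, LinearEquiv.map_smul, Finsupp.smul_apply,
        smul_eq_mul, mul_comm]
    simp only [h3] at h2
    simpa using h2
  have : c.repr (g j) = 0 := Finsupp.ext key
  simpa using congrArg c.repr.symm this

variable {ι : Type*}

/-- Scalar extension of a subspace of `ι → Fq` to a subspace of `ι → K`. -/
def extS (A : Submodule Fq (ι → Fq)) : Submodule K (ι → K) :=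
  Submodule.span K (embL Fq K ι '' A)

lemma extS_span (S : Set (ι → Fq)) :
    extS (K := K) (span Fq S) = span K (embL Fq K ι '' S) := by
  refine le_antisymm ?_ (span_mono (Set.image_mono subset_span))
  rw [extS]
  refine span_le.2 ?_
  rintro _ ⟨x, hx, rfl⟩
  have h1 : embL Fq K ι x ∈ Submodule.map (embL Fq K ι) (span Fq S) :=
    mem_map_of_mem hx
  rw [Submodule.map_span] at h1
  exact span_le_restrictScalars Fq K (embL Fq K ι '' S) h1

lemma extS_mono {A B : Submodule Fq (ι → Fq)} (h : A ≤ B) :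
    extS (K := K) A ≤ extS B :=
  span_mono (Set.image_mono h)

lemma extS_sup (A B : Submodule Fq (ι → Fq)) :
    extS (K := K) (A ⊔ B) = extS A ⊔ extS B := by
  have h : (A ⊔ B : Submodule Fq (ι → Fq)) = span Fq ((A : Set _) ∪ B) := by
    rw [span_union, span_eq, span_eq]
  rw [h, extS_span, Set.image_union, span_union]; rfl

lemma finrank_extS [Finite Fq] [Finite K] [Finite ι] (A : Submodule Fq (ι → Fq)) :
    finrank K (extS (K := K) A) = finrank Fq A := by
  haveI : Fintype ι := Fintype.ofFinite ι
  obtain ⟨b⟩ : Nonempty (Basis (Fin (finrank Fq A)) Fq A) := ⟨Module.finBasis Fq A⟩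
  set w : Fin (finrank Fq A) → (ι → Fq) := fun j => (b j : ι → Fq) with hw
  have hwli : LinearIndependent Fq w := b.linearIndependent.map' A.subtype (ker_subtype A)
  have hli := li_emb (K := K) hwli
  have hA : A = span Fq (Set.range w) := by
    have h1 : Submodule.map A.subtype ⊤ = A := map_subtype_top A
    rw [← b.span_eq, Submodule.map_span, ← Set.range_comp] at h1
    exact h1.symm
  have himg : embL Fq K ι '' Set.range w = Set.range fun j => embL Fq K ι (w j) := by
    rw [← Set.range_comp]; rfl
  rw [hA, extS_span, himg, finrank_span_eq_card hli, Fintype.card_fin]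
  rw [← hA]

lemma extS_inf [Finite Fq] [Finite K] [Finite ι] (A B : Submodule Fq (ι → Fq)) :
    extS (K := K) (A ⊓ B) = extS A ⊓ extS B := by
  haveI : Fintype ι := Fintype.ofFinite ι
  refine (Submodule.eq_of_le_of_finrank_le
    (le_inf (extS_mono inf_le_left) (extS_mono inf_le_right)) ?_)
  have h1 := Submodule.finrank_sup_add_finrank_inf_eq (extS (K := K) A) (extS (K := K) B)
  have h2 := Submodule.finrank_sup_add_finrank_inf_eq A B
  rw [← extS_sup, finrank_extS, finrank_extS, finrank_extS] at h1
  rw [finrank_extS]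
  omega

lemma extS_map_funLeft {κ : Type*} (g : κ → ι) (A : Submodule Fq (ι → Fq)) :
    (extS (K := K) A).map (LinearMap.funLeft K K g)
      = extS (A.map (LinearMap.funLeft Fq Fq g)) := by
  have hA : A.map (LinearMap.funLeft Fq Fq g)
      = span Fq (LinearMap.funLeft Fq Fq g '' A) := by
    conv_lhs => rw [← span_eq A]
    rw [Submodule.map_span]
  rw [hA, extS_span, extS, Submodule.map_span, Set.image_image, Set.image_image]
  exact congrArg (span K) (Set.image_congr fun x _ => rfl)

lemma finrank_map_add_finrank_inf_ker {F V W : Type*} [Field F] [AddCommGroup V]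
    [Module F V] [AddCommGroup W] [Module F W] [FiniteDimensional F V]
    (f : V →ₗ[F] W) (p : Submodule F V) :
    finrank F (p.map f) + finrank F (p ⊓ LinearMap.ker f : Submodule F V)
      = finrank F p := by
  have h := LinearMap.finrank_range_add_finrank_ker (f.domRestrict p)
  rw [LinearMap.range_domRestrict] at h
  have hker : LinearMap.ker (f.domRestrict p)
      = Submodule.comap p.subtype (p ⊓ LinearMap.ker f) := by
    ext x
    simp only [LinearMap.mem_ker, LinearMap.domRestrict_apply, Submodule.mem_comap,
      Submodule.mem_inf, Submodule.coe_subtype]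
    exact ⟨fun h => ⟨x.2, h⟩, fun h => h.2⟩
  rw [hker, LinearEquiv.finrank_eq (Submodule.comapSubtypeEquivOfLe (inf_le_left : p ⊓ LinearMap.ker f ≤ p))] at h
  exact h

lemma map_inf_comap_eq {F V W : Type*} [Field F] [AddCommGroup V] [Module F V]
    [AddCommGroup W] [Module F W] (f : V →ₗ[F] W) (p : Submodule F V)
    (q : Submodule F W) :
    (p ⊓ Submodule.comap f q).map f = p.map f ⊓ q := by
  refine le_antisymm (le_inf (Submodule.map_mono inf_le_left)
    ((Submodule.map_le_iff_le_comap).2 inf_le_right)) ?_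
  rintro x ⟨hx1, hx2⟩
  obtain ⟨a, ha, rfl⟩ := hx1
  exact ⟨a, ⟨ha, hx2⟩, rfl⟩

lemma finrank_ker_funLeft_inl (F : Type*) [Field F] (n₁ n₂ : ℕ) :
    finrank F (LinearMap.ker
      (LinearMap.funLeft F F (Sum.inl : Fin n₁ → Fin n₁ ⊕ Fin n₂))) = n₂ := by
  have hsurj : Function.Surjective
      (LinearMap.funLeft F F (Sum.inl : Fin n₁ → Fin n₁ ⊕ Fin n₂)) :=
    LinearMap.funLeft_surjective_of_injective F F _ Sum.inl_injective
  have h := LinearMap.finrank_range_add_finrank_ker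
    (LinearMap.funLeft F F (Sum.inl : Fin n₁ → Fin n₁ ⊕ Fin n₂))
  rw [LinearMap.range_eq_top.2 hsurj, finrank_top, Module.finrank_pi,
    Module.finrank_pi] at h
  simp only [Fintype.card_sum, Fintype.card_fin] at h
  omega

lemma ker_funLeft_inl_inf_inr (F : Type*) [Field F] (n₁ n₂ : ℕ) :
    LinearMap.ker (LinearMap.funLeft F F (Sum.inl : Fin n₁ → Fin n₁ ⊕ Fin n₂)) ⊓
      LinearMap.ker (LinearMap.funLeft F F (Sum.inr : Fin n₂ → Fin n₁ ⊕ Fin n₂)) = ⊥ := by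
  refine (Submodule.eq_bot_iff _).2 ?_
  intro x hx
  obtain ⟨h1, h2⟩ := Submodule.mem_inf.1 hx
  rw [LinearMap.mem_ker] at h1 h2
  funext s
  cases s with
  | inl i => exact congrFun h1 i
  | inr i => exact congrFun h2 i

lemma extS_ker_inl [Finite Fq] [Finite K] (n₁ n₂ : ℕ) :
    extS (K := K) (LinearMap.ker
        (LinearMap.funLeft Fq Fq (Sum.inl : Fin n₁ → Fin n₁ ⊕ Fin n₂)))
      = LinearMap.ker (LinearMap.funLeft K K (Sum.inl : Fin n₁ → Fin n₁ ⊕ Fin n₂)) := by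
  refine Submodule.eq_of_le_of_finrank_le ?_ ?_
  · rw [extS]
    refine span_le.2 ?_
    rintro _ ⟨x, hx, rfl⟩
    rw [SetLike.mem_coe, LinearMap.mem_ker] at hx ⊢
    funext i
    have := congrFun hx i
    simp only [LinearMap.funLeft_apply, Pi.zero_apply] at this ⊢
    simp [this]
  · rw [finrank_ker_funLeft_inl, finrank_extS, finrank_ker_funLeft_inl]

lemma rank_mul_emb {κ : Type*} [Fintype κ] {y : ℕ} [Fintype ι] (M : Matrix κ ι K)
    (Y : Matrix (Fin y) ι Fq) :
    (M * (Y.map (algebraMap Fq K))ᵀ).rank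
      = finrank K ((extS (K := K) (rowSpace Y)).map M.mulVecLin) := by
  have hspan : span K (Set.range (Y.map (algebraMap Fq K)))
      = extS (K := K) (rowSpace Y) := by
    rw [rowSpace, extS_span, ← Set.range_comp]
    rfl
  rw [Matrix.rank, Matrix.mulVecLin_mul, LinearMap.range_comp,
    Matrix.range_mulVecLin, col_transpose]
  exact congrArg (fun S => finrank K (Submodule.map M.mulVecLin S)) hspan

lemma rho_eval [Finite Fq] [Finite K] {n₂ k₂ : ℕ} (G₂ : Matrix (Fin k₂) (Fin n₂) K)
    (ρ₂ : Submodule Fq (Fin n₂ → Fq) → ℕ)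
    (hρ₂ : ∀ (y : ℕ) (Y : Matrix (Fin y) (Fin n₂) Fq),
      ρ₂ (rowSpace Y) = (G₂ * (Y.map (algebraMap Fq K))ᵀ).rank)
    (A : Submodule Fq (Fin n₂ → Fq)) :
    ρ₂ A = finrank K ((extS (K := K) A).map G₂.mulVecLin) := by
  haveI : Fintype A := Fintype.ofFinite A
  set e := (Fintype.equivFin A).symm with he
  set Y : Matrix (Fin (Fintype.card A)) (Fin n₂) Fq :=
    Matrix.of (fun j => (e j : Fin n₂ → Fq)) with hY
  have hA : rowSpace Y = A := by
    rw [rowSpace]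
    have hr : (Set.range fun j => Y j) = (A : Set _) := by
      ext x
      constructor
      · rintro ⟨j, rfl⟩
        exact (e j).2
      · intro hx
        exact ⟨e.symm ⟨x, hx⟩, by show ((e (e.symm ⟨x, hx⟩) : ↥A) : Fin n₂ → Fq) = x; rw [Equiv.apply_symm_apply]⟩
    rw [hr, Submodule.span_eq]
  rw [← hA, hρ₂, rank_mul_emb]

lemma ker_fromBlocks_mulVecLin {n₁ n₂ k₂ : ℕ} (G₂ : Matrix (Fin k₂) (Fin n₂) K) :
    LinearMap.ker (fromBlocks (1 : Matrix (Fin n₁) (Fin n₁) K) 0 0 G₂).mulVecLin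
      = LinearMap.ker (LinearMap.funLeft K K (Sum.inl : Fin n₁ → Fin n₁ ⊕ Fin n₂)) ⊓
        Submodule.comap (LinearMap.funLeft K K (Sum.inr : Fin n₂ → Fin n₁ ⊕ Fin n₂))
          (LinearMap.ker G₂.mulVecLin) := by
  ext x
  rw [LinearMap.mem_ker, Submodule.mem_inf, LinearMap.mem_ker, Submodule.mem_comap,
    LinearMap.mem_ker]
  have hx : (fromBlocks (1 : Matrix (Fin n₁) (Fin n₁) K) 0 0 G₂).mulVecLin x
      = Sum.elim (x ∘ Sum.inl) (G₂ *ᵥ (x ∘ Sum.inr)) := by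
    rw [Matrix.mulVecLin_apply, Matrix.fromBlocks_mulVec]
    simp
  rw [hx]
  constructor
  · intro h
    constructor
    · funext i
      exact congrFun h (Sum.inl i)
    · show G₂ *ᵥ (x ∘ Sum.inr) = 0
      funext i
      exact congrFun h (Sum.inr i)
  · rintro ⟨h1, h2⟩
    have h2' : G₂ *ᵥ (x ∘ Sum.inr) = 0 := h2
    funext s
    cases s with
    | inl i => exact congrFun h1 i
    | inr i => exact congrFun h2' i

end Aux

/-- Let `M₁ = U_{n₁,n₁}(q)` be the free q-matroid on `𝔽_q^{n₁}`
(rank function `V ↦ dim V`) and let `M₂ = M_{G₂}` be represented by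
`G₂ ∈ 𝔽_{q^m}^{k₂×n₂}`. Then `M₁ ⊕ M₂` is represented over `𝔽_{q^m}` by the block
diagonal matrix `G = diag(I_{n₁}, G₂)`; in particular `M₁ ⊕ M₂` is
`𝔽_{q^m}`-representable. -/
theorem stmt19 (Fq K : Type*) [Field Fq] [Fintype Fq] [Field K] [Fintype K] [Algebra Fq K]
    (n₁ n₂ k₂ : ℕ) (G₂ : Matrix (Fin k₂) (Fin n₂) K)
    (ρ₂ : Submodule Fq (Fin n₂ → Fq) → ℕ)
    (hρ₂ : ∀ (y : ℕ) (Y : Matrix (Fin y) (Fin n₂) Fq),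
      ρ₂ (rowSpace Y) = (G₂ * (Y.map (algebraMap Fq K))ᵀ).rank) :
    ∀ (y : ℕ) (Y : Matrix (Fin y) (Fin n₁ ⊕ Fin n₂) Fq),
      ((fromBlocks (1 : Matrix (Fin n₁) (Fin n₁) K) 0 0 G₂ *
          (Y.map (algebraMap Fq K))ᵀ).rank : ℤ) =
        dsRank (fun V => finrank Fq V) ρ₂ (rowSpace Y) := by
  intro y Y
  classical
  rw [rank_mul_emb]
  -- notation (as plain defs, not `set`, to keep syntactic match with `dsRank`)
  have hD : ∃ D : ℕ, D = finrank K
      ((extS (K := K) ((rowSpace Y ⊓ LinearMap.ker (LinearMap.funLeft Fq Fq Sum.inl)).map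
        (LinearMap.funLeft Fq Fq (Sum.inr : Fin n₂ → Fin n₁ ⊕ Fin n₂)))) ⊓
        LinearMap.ker G₂.mulVecLin : Submodule K (Fin n₂ → K)) := ⟨_, rfl⟩
  obtain ⟨D, hD⟩ := hD
  -- (1) the special subspace X₀ and basic kernel facts
  have hkerFq := ker_funLeft_inl_inf_inr Fq n₁ n₂
  have hkerK := ker_funLeft_inl_inf_inr K n₁ n₂
  -- (2) finrank of the intersection with the kernel of the block map equals D
  have hVker : finrank K (extS (K := K) (rowSpace Y) ⊓ LinearMap.ker
      ((fromBlocks (1 : Matrix (Fin n₁) (Fin n₁) K) 0 0 G₂).mulVecLin) :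
        Submodule K ((Fin n₁ ⊕ Fin n₂) → K)) = D := by
    rw [ker_fromBlocks_mulVecLin, ← inf_assoc, ← extS_ker_inl (Fq := Fq) (K := K) n₁ n₂, ← extS_inf]
    have hP1 : ((extS (K := K) (rowSpace Y ⊓ LinearMap.ker (LinearMap.funLeft Fq Fq Sum.inl))) ⊓
        Submodule.comap (LinearMap.funLeft K K (Sum.inr : Fin n₂ → Fin n₁ ⊕ Fin n₂))
          (LinearMap.ker G₂.mulVecLin)).map
            (LinearMap.funLeft K K (Sum.inr : Fin n₂ → Fin n₁ ⊕ Fin n₂))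
        = extS (K := K) ((rowSpace Y ⊓ LinearMap.ker (LinearMap.funLeft Fq Fq Sum.inl)).map
            (LinearMap.funLeft Fq Fq (Sum.inr : Fin n₂ → Fin n₁ ⊕ Fin n₂))) ⊓
          LinearMap.ker G₂.mulVecLin := by
      rw [map_inf_comap_eq, extS_map_funLeft]
    have hle : extS (K := K) (rowSpace Y ⊓ LinearMap.ker (LinearMap.funLeft Fq Fq Sum.inl))
        ≤ LinearMap.ker (LinearMap.funLeft K K (Sum.inl : Fin n₁ → Fin n₁ ⊕ Fin n₂)) := by
      rw [← extS_ker_inl (Fq := Fq) (K := K) n₁ n₂]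
      exact extS_mono inf_le_right
    have hPk : ((extS (K := K) (rowSpace Y ⊓ LinearMap.ker (LinearMap.funLeft Fq Fq Sum.inl))) ⊓
        Submodule.comap (LinearMap.funLeft K K (Sum.inr : Fin n₂ → Fin n₁ ⊕ Fin n₂))
          (LinearMap.ker G₂.mulVecLin)) ⊓
        LinearMap.ker (LinearMap.funLeft K K (Sum.inr : Fin n₂ → Fin n₁ ⊕ Fin n₂)) = ⊥ := by
      refine le_bot_iff.1 ?_
      refine le_trans (inf_le_inf_right _ (le_trans inf_le_left hle)) ?_
      rw [hkerK]
    have h3 := finrank_map_add_finrank_inf_ker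
      (LinearMap.funLeft K K (Sum.inr : Fin n₂ → Fin n₁ ⊕ Fin n₂))
      ((extS (K := K) (rowSpace Y ⊓ LinearMap.ker (LinearMap.funLeft Fq Fq Sum.inl))) ⊓
        Submodule.comap (LinearMap.funLeft K K (Sum.inr : Fin n₂ → Fin n₁ ⊕ Fin n₂))
          (LinearMap.ker G₂.mulVecLin))
    rw [hP1, hPk, finrank_bot, ← hD] at h3
    omega
  -- (3) rank-nullity over K for the whole row space
  have hL : finrank K ((extS (K := K) (rowSpace Y)).map
      (fromBlocks (1 : Matrix (Fin n₁) (Fin n₁) K) 0 0 G₂).mulVecLin) + D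
        = finrank Fq (rowSpace Y) := by
    have h := finrank_map_add_finrank_inf_ker
      ((fromBlocks (1 : Matrix (Fin n₁) (Fin n₁) K) 0 0 G₂).mulVecLin)
      (extS (K := K) (rowSpace Y))
    rw [hVker, finrank_extS] at h
    exact h
  -- (4) `-D` is the least element of the set appearing in `dsRank`
  have hrho := rho_eval (K := K) G₂ ρ₂ hρ₂
  have hleast : IsLeast {z : ℤ | ∃ X : Submodule Fq ((Fin n₁ ⊕ Fin n₂) → Fq),
      X ≤ rowSpace Y ∧
      z = (finrank Fq (X.map (LinearMap.funLeft Fq Fq Sum.inl)) : ℤ) +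
            (ρ₂ (X.map (LinearMap.funLeft Fq Fq Sum.inr)) : ℤ) - (finrank Fq X : ℤ)}
      (-(D : ℤ)) := by
    constructor
    · refine ⟨rowSpace Y ⊓ LinearMap.ker (LinearMap.funLeft Fq Fq Sum.inl), inf_le_left, ?_⟩
      have hmap1 : (rowSpace Y ⊓ LinearMap.ker (LinearMap.funLeft Fq Fq Sum.inl)).map
          (LinearMap.funLeft Fq Fq (Sum.inl : Fin n₁ → Fin n₁ ⊕ Fin n₂)) = ⊥ := by
        refine le_bot_iff.1 ?_
        rw [Submodule.map_le_iff_le_comap]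
        exact inf_le_right
      have h4 := finrank_map_add_finrank_inf_ker G₂.mulVecLin
        (extS (K := K) ((rowSpace Y ⊓ LinearMap.ker (LinearMap.funLeft Fq Fq Sum.inl)).map
          (LinearMap.funLeft Fq Fq (Sum.inr : Fin n₂ → Fin n₁ ⊕ Fin n₂))))
      rw [finrank_extS, ← hD] at h4
      have h5 := hrho ((rowSpace Y ⊓ LinearMap.ker (LinearMap.funLeft Fq Fq Sum.inl)).map
        (LinearMap.funLeft Fq Fq (Sum.inr : Fin n₂ → Fin n₁ ⊕ Fin n₂)))
      have h6 := finrank_map_add_finrank_inf_ker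
        (LinearMap.funLeft Fq Fq (Sum.inr : Fin n₂ → Fin n₁ ⊕ Fin n₂))
        (rowSpace Y ⊓ LinearMap.ker (LinearMap.funLeft Fq Fq Sum.inl))
      have h7 : (rowSpace Y ⊓ LinearMap.ker (LinearMap.funLeft Fq Fq Sum.inl)) ⊓
          LinearMap.ker (LinearMap.funLeft Fq Fq (Sum.inr : Fin n₂ → Fin n₁ ⊕ Fin n₂)) = ⊥ := by
        refine le_bot_iff.1 ?_
        refine le_trans (inf_le_inf_right _ inf_le_right) ?_
        rw [hkerFq]
      rw [h7, finrank_bot] at h6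
      rw [hmap1, finrank_bot]
      omega
    · rintro z ⟨X, hXV, rfl⟩
      have e1 := finrank_map_add_finrank_inf_ker
        (LinearMap.funLeft Fq Fq (Sum.inl : Fin n₁ → Fin n₁ ⊕ Fin n₂)) X
      have e2 := finrank_map_add_finrank_inf_ker
        (LinearMap.funLeft Fq Fq (Sum.inr : Fin n₂ → Fin n₁ ⊕ Fin n₂))
        (X ⊓ LinearMap.ker (LinearMap.funLeft Fq Fq Sum.inl))
      have h7 : (X ⊓ LinearMap.ker (LinearMap.funLeft Fq Fq Sum.inl)) ⊓
          LinearMap.ker (LinearMap.funLeft Fq Fq (Sum.inr : Fin n₂ → Fin n₁ ⊕ Fin n₂)) = ⊥ := by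
        refine le_bot_iff.1 ?_
        refine le_trans (inf_le_inf_right _ inf_le_right) ?_
        rw [hkerFq]
      rw [h7, finrank_bot] at e2
      have h5 := hrho (X.map (LinearMap.funLeft Fq Fq (Sum.inr : Fin n₂ → Fin n₁ ⊕ Fin n₂)))
      have h4 := finrank_map_add_finrank_inf_ker G₂.mulVecLin
        (extS (K := K) (X.map (LinearMap.funLeft Fq Fq (Sum.inr : Fin n₂ → Fin n₁ ⊕ Fin n₂))))
      rw [finrank_extS] at h4
      have hBA : extS (K := K) ((X ⊓ LinearMap.ker (LinearMap.funLeft Fq Fq Sum.inl)).map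
            (LinearMap.funLeft Fq Fq (Sum.inr : Fin n₂ → Fin n₁ ⊕ Fin n₂)))
          ≤ extS (K := K) (X.map (LinearMap.funLeft Fq Fq (Sum.inr : Fin n₂ → Fin n₁ ⊕ Fin n₂))) :=
        extS_mono (Submodule.map_mono inf_le_left)
      have hBW : extS (K := K) ((X ⊓ LinearMap.ker (LinearMap.funLeft Fq Fq Sum.inl)).map
            (LinearMap.funLeft Fq Fq (Sum.inr : Fin n₂ → Fin n₁ ⊕ Fin n₂))) ⊓
          LinearMap.ker G₂.mulVecLin
          ≤ extS (K := K) ((rowSpace Y ⊓ LinearMap.ker (LinearMap.funLeft Fq Fq Sum.inl)).map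
            (LinearMap.funLeft Fq Fq (Sum.inr : Fin n₂ → Fin n₁ ⊕ Fin n₂))) ⊓
          LinearMap.ker G₂.mulVecLin :=
        inf_le_inf_right _ (extS_mono (Submodule.map_mono (inf_le_inf_right _ hXV)))
      have e5 := Submodule.finrank_sup_add_finrank_inf_eq
        (extS (K := K) (X.map (LinearMap.funLeft Fq Fq (Sum.inr : Fin n₂ → Fin n₁ ⊕ Fin n₂))) ⊓
          LinearMap.ker G₂.mulVecLin)
        (extS (K := K) ((X ⊓ LinearMap.ker (LinearMap.funLeft Fq Fq Sum.inl)).map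
          (LinearMap.funLeft Fq Fq (Sum.inr : Fin n₂ → Fin n₁ ⊕ Fin n₂))))
      have hinf : (extS (K := K) (X.map (LinearMap.funLeft Fq Fq
            (Sum.inr : Fin n₂ → Fin n₁ ⊕ Fin n₂))) ⊓ LinearMap.ker G₂.mulVecLin) ⊓
          extS (K := K) ((X ⊓ LinearMap.ker (LinearMap.funLeft Fq Fq Sum.inl)).map
            (LinearMap.funLeft Fq Fq (Sum.inr : Fin n₂ → Fin n₁ ⊕ Fin n₂)))
          = extS (K := K) ((X ⊓ LinearMap.ker (LinearMap.funLeft Fq Fq Sum.inl)).map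
            (LinearMap.funLeft Fq Fq (Sum.inr : Fin n₂ → Fin n₁ ⊕ Fin n₂))) ⊓
            LinearMap.ker G₂.mulVecLin := by
        rw [inf_right_comm, inf_eq_right.2 hBA]
      have hsup : finrank K ((extS (K := K) (X.map (LinearMap.funLeft Fq Fq
            (Sum.inr : Fin n₂ → Fin n₁ ⊕ Fin n₂))) ⊓ LinearMap.ker G₂.mulVecLin) ⊔
          extS (K := K) ((X ⊓ LinearMap.ker (LinearMap.funLeft Fq Fq Sum.inl)).map
            (LinearMap.funLeft Fq Fq (Sum.inr : Fin n₂ → Fin n₁ ⊕ Fin n₂)))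
            : Submodule K (Fin n₂ → K))
          ≤ finrank K (extS (K := K) (X.map (LinearMap.funLeft Fq Fq
            (Sum.inr : Fin n₂ → Fin n₁ ⊕ Fin n₂)))) :=
        Submodule.finrank_mono (sup_le inf_le_left hBA)
      have hD6 : finrank K (extS (K := K) ((X ⊓ LinearMap.ker
            (LinearMap.funLeft Fq Fq Sum.inl)).map
            (LinearMap.funLeft Fq Fq (Sum.inr : Fin n₂ → Fin n₁ ⊕ Fin n₂))) ⊓
          LinearMap.ker G₂.mulVecLin : Submodule K (Fin n₂ → K)) ≤ D := by
        rw [hD]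
        exact Submodule.finrank_mono hBW
      rw [hinf] at e5
      have frA := finrank_extS (K := K)
        (X.map (LinearMap.funLeft Fq Fq (Sum.inr : Fin n₂ → Fin n₁ ⊕ Fin n₂)))
      have frB := finrank_extS (K := K)
        ((X ⊓ LinearMap.ker (LinearMap.funLeft Fq Fq Sum.inl)).map
          (LinearMap.funLeft Fq Fq (Sum.inr : Fin n₂ → Fin n₁ ⊕ Fin n₂)))
      omega
  have hRHS : dsRank (fun V => finrank Fq V) ρ₂ (rowSpace Y)
      = (finrank Fq (rowSpace Y) : ℤ) + (-(D : ℤ)) := by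
    simp only [dsRank]
    congr 1
    exact hleast.csInf_eq
  rw [hRHS]
  omega
end
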